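/- arXiv:2301.09529 — 3 statements merged into one kernel-verified Lean document; each statement's English description precedes it below -/
import Mathlib

section
/- Let (P, ≤, ', 0, 1) be a sharply paraorthomodular mlb-complete poset with x → y := { y ∨ m | m ∈ Max L(x', y') }. Suppose a ≤ b' and b ∧ b' = 0. Then a → b = {b} if and only if a = b'. -/
/-!
If `a = b'` then `Max L(a', b') = Max L(b, b') = {0}`, so `a → b = {b ∨ 0} = {b}`.
Conversely, by paraorthomodularity it suffices that `a' ∧ b' = 0`. Any lower bound of `a', b'`
lies below some `m ∈ Max L(a', b')`; as `m ≤ b'`, orthogonality provides `b ∨ m ∈ a → b = {b}`,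
so `m ≤ b ∧ b' = 0`.
-/

/-- The set of maximal elements of the lower cone `L(a,b)`. -/
def MaxL {P : Type*} [PartialOrder P] (a b : P) : Set P :=
  {m | m ≤ a ∧ m ≤ b ∧ ∀ z, z ≤ a → z ≤ b → m ≤ z → z = m}

/-- The implication operator `x → y := { y ∨ m | m ∈ Max L(x', y') }`,
where `y ∨ m` is expressed via `IsLUB`. -/
def parrow {P : Type*} [PartialOrder P] (c : P → P) (x y : P) : Set P :=
  {w | ∃ m ∈ MaxL (c x) (c y), IsLUB {y, m} w}

section

variable {P : Type*} [PartialOrder P]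

theorem mem_lowerBounds_pair {a b m : P} : m ∈ lowerBounds {a, b} ↔ m ≤ a ∧ m ≤ b := by
  simp [lowerBounds_insert]

theorem isLUB_pair_of_le {a b : P} (h : b ≤ a) : IsLUB {a, b} a :=
  ⟨by simp [upperBounds_insert, h], fun _ hu => hu (Set.mem_insert _ _)⟩

def MlbComplete (P : Type*) [PartialOrder P] : Prop :=
  ∀ (M : Finset P) (x : P), (∀ m ∈ M, x ≤ m) →
    ∃ z, x ≤ z ∧ (∀ m ∈ M, z ≤ m) ∧ ∀ w, (∀ m ∈ M, w ≤ m) → z ≤ w → w = z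

theorem MlbComplete.exists_mem_maxL_ge (h : MlbComplete P) {a b m : P} (ha : m ≤ a)
    (hb : m ≤ b) : ∃ z ∈ MaxL a b, m ≤ z := by
  classical
  obtain ⟨z, hmz, hz, hmax⟩ := h {a, b} m (by simp [ha, hb])
  exact ⟨z, ⟨hz a (by simp), hz b (by simp), fun w hwa hwb => hmax w (by simp [hwa, hwb])⟩, hmz⟩

theorem maxL_eq_singleton_bot [OrderBot P] {a b : P} (h : IsGLB {a, b} ⊥) :
    MaxL a b = {⊥} := by
  have eq_bot : ∀ z, z ≤ a → z ≤ b → z = ⊥ := fun z ha hb =>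
    le_bot_iff.1 (h.2 (mem_lowerBounds_pair.2 ⟨ha, hb⟩))
  ext m
  constructor
  · rintro ⟨ha, hb, -⟩
    exact eq_bot m ha hb
  · rintro rfl
    exact ⟨bot_le, bot_le, fun z ha hb _ => eq_bot z ha hb⟩

theorem parrow_eq_singleton_of_isGLB [OrderBot P] {c : P → P} {x y : P}
    (h : IsGLB {c x, c y} ⊥) : parrow c x y = {y} := by
  ext w
  simp only [parrow, maxL_eq_singleton_bot h, Set.mem_singleton_iff, exists_eq_left]
  exact ⟨fun hw => hw.unique (isLUB_pair_of_le bot_le), fun hw => hw ▸ isLUB_pair_of_le bot_le⟩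

theorem exists_mem_parrow_ge {c : P → P} (hOrth : ∀ x y : P, x ≤ c y → ∃ s, IsLUB {x, y} s)
    {x y z : P} (hz : z ∈ MaxL (c x) (c y)) : ∃ w ∈ parrow c x y, z ≤ w := by
  obtain ⟨s, hs⟩ := hOrth z y hz.2.1
  exact ⟨s, ⟨z, hz, Set.pair_comm z y ▸ hs⟩, hs.1 (Set.mem_insert _ _)⟩

theorem isGLB_bot_of_parrow_subset [OrderBot P] {c : P → P} (hMlb : MlbComplete P)
    (hOrth : ∀ x y : P, x ≤ c y → ∃ s, IsLUB {x, y} s) {x y : P} (hy : IsGLB {y, c y} ⊥)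
    (h : parrow c x y ⊆ {y}) : IsGLB {c x, c y} ⊥ := by
  refine ⟨fun _ _ => bot_le, fun m hm => ?_⟩
  obtain ⟨hmx, hmy⟩ := mem_lowerBounds_pair.1 hm
  obtain ⟨z, hz, hmz⟩ := hMlb.exists_mem_maxL_ge hmx hmy
  obtain ⟨w, hw, hzw⟩ := exists_mem_parrow_ge hOrth hz
  have hzy : z ≤ y := Set.mem_singleton_iff.1 (h hw) ▸ hzw
  exact hmz.trans (hy.2 (mem_lowerBounds_pair.2 ⟨hzy, hz.2.1⟩))

end

theorem stmt_5_general {P : Type*} [PartialOrder P] [BoundedOrder P] (c : P → P)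
    (hI : ∀ x : P, c (c x) = x)
    (hOrth : ∀ x y : P, x ≤ c y → ∃ s, IsLUB {x, y} s)
    (hP : ∀ x y : P, x ≤ y → IsGLB {c x, y} ⊥ → x = y)
    (hMlb : ∀ (M : Finset P) (x : P), (∀ m ∈ M, x ≤ m) →
      ∃ z, x ≤ z ∧ (∀ m ∈ M, z ≤ m) ∧ ∀ w, (∀ m ∈ M, w ≤ m) → z ≤ w → w = z)
    (a b : P) (hab : a ≤ c b) (hbb : IsGLB {b, c b} (⊥ : P)) :
    parrow c a b = {b} ↔ a = c b := by
  constructor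
  · intro h
    exact hP a (c b) hab (isGLB_bot_of_parrow_subset hMlb hOrth hbb h.subset)
  · rintro rfl
    exact parrow_eq_singleton_of_isGLB (by rwa [hI])

theorem stmt_5 {P : Type*} [PartialOrder P] [BoundedOrder P] (c : P → P)
    (hA : ∀ x y : P, x ≤ y → c y ≤ c x) (hI : ∀ x : P, c (c x) = x)
    (hOrth : ∀ x y : P, x ≤ c y → ∃ s, IsLUB {x, y} s)
    (hP : ∀ x y : P, x ≤ y → IsGLB {c x, y} ⊥ → x = y)
    (hMlb : ∀ (M : Finset P) (x : P), (∀ m ∈ M, x ≤ m) →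
      ∃ z, x ≤ z ∧ (∀ m ∈ M, z ≤ m) ∧ ∀ w, (∀ m ∈ M, w ≤ m) → z ≤ w → w = z)
    (a b : P) (hab : a ≤ c b) (hbb : IsGLB {b, c b} (⊥ : P)) :
    parrow c a b = {b} ↔ a = c b :=
  stmt_5_general c hI hOrth hP hMlb a b hab hbb
end

section
/- Let (P, ≤, ', 0, 1) be an orthogonal mlb-complete poset with x → y := { y ∨ m | m ∈ Max L(x', y') }. Then P is paraorthomodular if and only if for all x, y: x → y = {1} implies x ≤ y. -/
namespace AntitoneInvolution

variable {P : Type*} [PartialOrder P] {c : P → P}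

theorem le_of_compl_le_compl (hA : ∀ x y : P, x ≤ y → c y ≤ c x) (hI : ∀ x : P, c (c x) = x)
    {a b : P} (h : c a ≤ c b) : b ≤ a := by
  simpa only [hI] using hA _ _ h

theorem le_compl_comm (hA : ∀ x y : P, x ≤ y → c y ≤ c x) (hI : ∀ x : P, c (c x) = x)
    {a b : P} (h : a ≤ c b) : b ≤ c a := by
  simpa only [hI] using hA _ _ h

def complOrderIso (hA : ∀ x y : P, x ≤ y → c y ≤ c x) (hI : ∀ x : P, c (c x) = x) :
    P ≃o Pᵒᵈ where
  toFun := OrderDual.toDual ∘ c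
  invFun := c ∘ OrderDual.ofDual
  left_inv := hI
  right_inv := hI
  map_rel_iff' := ⟨le_of_compl_le_compl hA hI, hA _ _⟩

theorem isGLB_image_compl_iff (hA : ∀ x y : P, x ≤ y → c y ≤ c x) (hI : ∀ x : P, c (c x) = x)
    {s : Set P} {a : P} : IsGLB (c '' s) (c a) ↔ IsLUB s a :=
  (complOrderIso hA hI).isLUB_image'

theorem compl_top [BoundedOrder P] (hA : ∀ x y : P, x ≤ y → c y ≤ c x)
    (hI : ∀ x : P, c (c x) = x) : c ⊤ = ⊥ :=
  (complOrderIso hA hI).map_top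

theorem isGLB_compl_pair_bot_iff [BoundedOrder P] (hA : ∀ x y : P, x ≤ y → c y ≤ c x)
    (hI : ∀ x : P, c (c x) = x) {a b : P} : IsGLB {c a, c b} ⊥ ↔ IsLUB {a, b} ⊤ := by
  rw [← compl_top hA hI, ← Set.image_pair, isGLB_image_compl_iff hA hI]

end AntitoneInvolution

section Implication

variable {P : Type*} [PartialOrder P] {c : P → P}

theorem MaxL_eq_singleton_of_le {a b : P} (h : a ≤ b) : MaxL a b = {a} := by
  ext m
  refine ⟨fun hm => (hm.2.2 a le_rfl h hm.1).symm, ?_⟩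
  rintro rfl
  exact ⟨le_rfl, h, fun z hza _ hmz => le_antisymm hza hmz⟩

theorem MaxL_nonempty [OrderBot P]
    (hMlb : ∀ (M : Finset P) (x : P), (∀ m ∈ M, x ≤ m) →
      ∃ z, x ≤ z ∧ (∀ m ∈ M, z ≤ m) ∧ ∀ w, (∀ m ∈ M, w ≤ m) → z ≤ w → w = z)
    (a b : P) : (MaxL a b).Nonempty := by
  classical
  obtain ⟨m, -, hm_le, hm_max⟩ := hMlb {a, b} ⊥ fun _ _ => bot_le
  simp only [Finset.mem_insert, Finset.mem_singleton, forall_eq_or_imp, forall_eq] at hm_le hm_max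
  exact ⟨m, hm_le.1, hm_le.2, fun z hza hzb => hm_max z ⟨hza, hzb⟩⟩

theorem parrow_eq_singleton_of_le (hA : ∀ x y : P, x ≤ y → c y ≤ c x) {x y w : P}
    (hxy : x ≤ y) (hw : IsLUB {x, c y} w) : parrow c y x = {w} := by
  ext v
  simp only [parrow, MaxL_eq_singleton_of_le (hA _ _ hxy), exists_eq_left, Set.mem_singleton_iff]
  exact ⟨fun hv => hv.unique hw, fun hv => hv ▸ hw⟩

end Implication

theorem stmt_7 {P : Type*} [PartialOrder P] [BoundedOrder P] (c : P → P)
    (hA : ∀ x y : P, x ≤ y → c y ≤ c x) (hI : ∀ x : P, c (c x) = x)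
    (hOrth : ∀ x y : P, x ≤ c y → ∃ s, IsLUB {x, y} s)
    (hMlb : ∀ (M : Finset P) (x : P), (∀ m ∈ M, x ≤ m) →
      ∃ z, x ≤ z ∧ (∀ m ∈ M, z ≤ m) ∧ ∀ w, (∀ m ∈ M, w ≤ m) → z ≤ w → w = z) :
    (∀ x y : P, x ≤ y → IsGLB {c x, y} ⊥ → x = y) ↔
      (∀ x y : P, parrow c x y = {⊤} → x ≤ y) := by
  open AntitoneInvolution in
  constructor
  · intro hPom x y hxy
    obtain ⟨m, hm⟩ := MaxL_nonempty hMlb (c x) (c y)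
    obtain ⟨s, hs⟩ := hOrth y m (le_compl_comm hA hI hm.2.1)
    have hs_mem : s ∈ parrow c x y := ⟨m, hm, hs⟩
    rw [hxy, Set.mem_singleton_iff] at hs_mem
    subst hs_mem
    have hm_eq : m = c y :=
      hPom m (c y) hm.2.1 ((isGLB_compl_pair_bot_iff hA hI).2 (Set.pair_comm y m ▸ hs))
    exact le_of_compl_le_compl hA hI (hm_eq ▸ hm.1)
  · intro hImp x y hxy hGlb
    rw [← hI y, isGLB_compl_pair_bot_iff hA hI] at hGlb
    exact le_antisymm hxy (hImp y x (parrow_eq_singleton_of_le hA hxy hGlb))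
end

section
/- Let K be an atomic amalgam of a pasted family of Kleene lattices {K_i}, and let x, y ∈ K with x ≤ y in the block K_i and y ≠ x'. Then x is covered by y in K if and only if x is covered by y in K_i. -/
/-- A pasted family of finite Kleene lattices over a common carrier `K`,
indexed by `ι`.  Each block `blk i` carries a bounded distributive lattice
structure `(le i, inf i, sup i, bot, top)` with an antitone involution `compl`
which is paraorthomodular and regular (i.e. each block is a Kleene lattice)
and has at least 6 elements.  Any two distinct blocks intersect either in
`{bot, top}` or in a common atomic Kleene subalgebra of at most 4 elements on
which the operations coincide and whose elements other than `bot`, `top` are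
simultaneously atoms or simultaneously coatoms of both blocks. -/
structure PastedFamily (K : Type*) (ι : Type*) where
  blk : ι → Set K
  cover : ∀ x : K, ∃ i, x ∈ blk i
  le : ι → K → K → Prop
  inf : ι → K → K → K
  sup : ι → K → K → K
  compl : K → K
  bot : K
  top : K
  bot_mem : ∀ i, bot ∈ blk i
  top_mem : ∀ i, top ∈ blk i
  finite : ∀ i, (blk i).Finite
  card6 : ∀ i, 6 ≤ (blk i).ncard
  le_refl : ∀ i x, x ∈ blk i → le i x x
  le_antisymm' : ∀ i x y, le i x y → le i y x → x = y
  le_trans' : ∀ i x y z, le i x y → le i y z → le i x z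
  bot_le : ∀ i x, x ∈ blk i → le i bot x
  le_top : ∀ i x, x ∈ blk i → le i x top
  inf_mem : ∀ i x y, x ∈ blk i → y ∈ blk i → inf i x y ∈ blk i
  sup_mem : ∀ i x y, x ∈ blk i → y ∈ blk i → sup i x y ∈ blk i
  inf_le_left : ∀ i x y, x ∈ blk i → y ∈ blk i → le i (inf i x y) x
  inf_le_right : ∀ i x y, x ∈ blk i → y ∈ blk i → le i (inf i x y) y
  le_inf : ∀ i x y z, x ∈ blk i → y ∈ blk i → z ∈ blk i →
    le i z x → le i z y → le i z (inf i x y)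
  le_sup_left : ∀ i x y, x ∈ blk i → y ∈ blk i → le i x (sup i x y)
  le_sup_right : ∀ i x y, x ∈ blk i → y ∈ blk i → le i y (sup i x y)
  sup_le : ∀ i x y z, x ∈ blk i → y ∈ blk i → z ∈ blk i →
    le i x z → le i y z → le i (sup i x y) z
  distrib : ∀ i x y z, x ∈ blk i → y ∈ blk i → z ∈ blk i →
    inf i x (sup i y z) = sup i (inf i x y) (inf i x z)
  compl_mem : ∀ i x, x ∈ blk i → compl x ∈ blk i
  compl_antitone : ∀ i x y, x ∈ blk i → y ∈ blk i → le i x y →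
    le i (compl y) (compl x)
  compl_invol : ∀ x, compl (compl x) = x
  /-- Each block is paraorthomodular. -/
  blockParaOM : ∀ i x y, x ∈ blk i → y ∈ blk i → le i x y →
    inf i (compl x) y = bot → x = y
  /-- Each block is regular (Kleene condition). -/
  regular : ∀ i x y, x ∈ blk i → y ∈ blk i →
    le i (inf i x (compl x)) (sup i y (compl y))
  /-- The block orders agree on intersections of blocks. -/
  le_compat : ∀ i j x y, x ∈ blk i → y ∈ blk i → x ∈ blk j → y ∈ blk j →
    le i x y → le j x y
  /-- Pasting condition on the intersection of two distinct blocks. -/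
  inter : ∀ i j, i ≠ j → blk i ∩ blk j = {bot, top} ∨
    ((blk i ∩ blk j).ncard ≤ 4 ∧
     bot ∈ blk i ∩ blk j ∧ top ∈ blk i ∩ blk j ∧
     (∀ x ∈ blk i ∩ blk j, compl x ∈ blk i ∩ blk j) ∧
     (∀ x y, x ∈ blk i ∩ blk j → y ∈ blk i ∩ blk j →
       inf i x y = inf j x y ∧ inf i x y ∈ blk i ∩ blk j ∧
       sup i x y = sup j x y ∧ sup i x y ∈ blk i ∩ blk j) ∧
     (∀ x ∈ blk i ∩ blk j, x ≠ bot → x ≠ top →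
       ((x ≠ bot ∧ ∀ z ∈ blk i, le i z x → z = bot ∨ z = x) ∧
        (x ≠ bot ∧ ∀ z ∈ blk j, le j z x → z = bot ∨ z = x)) ∨
       ((x ≠ top ∧ ∀ z ∈ blk i, le i x z → z = top ∨ z = x) ∧
        (x ≠ top ∧ ∀ z ∈ blk j, le j x z → z = top ∨ z = x))))

namespace PastedFamily

variable {K ι : Type*} (A : PastedFamily K ι)

/-- The order of the atomic amalgam: `x ≤ y` iff `x ≤ y` in some block. -/
def gle (x y : K) : Prop := ∃ i, x ∈ A.blk i ∧ y ∈ A.blk i ∧ A.le i x y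

/-- `s` is the least upper bound of `x` and `y` in the amalgam. -/
def IsLubA (x y s : K) : Prop :=
  A.gle x s ∧ A.gle y s ∧ ∀ z, A.gle x z → A.gle y z → A.gle s z

/-- `m` is the greatest lower bound of `x` and `y` in the amalgam. -/
def IsGlbA (x y m : K) : Prop :=
  A.gle m x ∧ A.gle m y ∧ ∀ z, A.gle z x → A.gle z y → A.gle z m

/-- Paraorthomodularity of the amalgam: `x ≤ y` and `x' ∧ y = 0`
(i.e. the lower cone `L(x', y)` is `{0}`) imply `x = y`. -/
def ParaOM : Prop := ∀ x y, A.gle x y →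
  (∀ z, A.gle z (A.compl x) → A.gle z y → z = A.bot) → x = y

/-- Blocks `i, j, k` form an atomic loop of order 3: consecutive (cyclic)
intersections have exactly 4 elements and the triple intersection is `{0,1}`. -/
def AtomicLoop3 (i j k : ι) : Prop :=
  (A.blk i ∩ A.blk j).ncard = 4 ∧ (A.blk j ∩ A.blk k).ncard = 4 ∧
  (A.blk k ∩ A.blk i).ncard = 4 ∧
  A.blk i ∩ A.blk j ∩ A.blk k = {A.bot, A.top}

/-- Blocks `i, j, k, l` form an atomic loop of order 4. -/
def AtomicLoop4 (i j k l : ι) : Prop :=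
  (A.blk i ∩ A.blk j).ncard = 4 ∧ (A.blk j ∩ A.blk k).ncard = 4 ∧
  (A.blk k ∩ A.blk l).ncard = 4 ∧ (A.blk l ∩ A.blk i).ncard = 4 ∧
  A.blk i ∩ A.blk k = {A.bot, A.top} ∧ A.blk j ∩ A.blk l = {A.bot, A.top} ∧
  A.blk i ∩ A.blk j ∩ A.blk k = {A.bot, A.top} ∧
  A.blk i ∩ A.blk j ∩ A.blk l = {A.bot, A.top} ∧
  A.blk i ∩ A.blk k ∩ A.blk l = {A.bot, A.top} ∧
  A.blk j ∩ A.blk k ∩ A.blk l = {A.bot, A.top}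

end PastedFamily


/-!
An element `z` strictly between `x` and `y` but outside `K_i` lies in blocks `K_j ∋ x` and
`K_k ∋ y` other than `K_i`. A nontrivial element shared by two blocks is an atom of both or a
coatom of both, and no element of a block is both, since a bounded distributive lattice with such
an element has at most four elements. If `x = 0`, then `y ≠ 1` is an atom of `K_i`, hence of
`K_k`, so `z = y`; dually if `y = 1`. Otherwise, if `j ≠ k` then `z` is an atom or a coatom of
both `K_j` and `K_k`, hence equals `x` or `y`. If `j = k`, then `K_i ∩ K_j = {0, x, y, 1}` is
closed under `'`, so `y ≠ x'` forces `x' = x` and `y' = y`, and regularity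
`y ∧ y' ≤ x ∨ x'` gives `y ≤ x`.
-/

theorem card_le_four_of_isAtom_of_isCoatom {α : Type*} [DistribLattice α] [BoundedOrder α]
    {a : α} (h₁ : IsAtom a) (h₂ : IsCoatom a) : Nat.card α ≤ 4 := by
  have hcases : ∀ b : α, b ∈ ({⊥, a, ⊤} : Set α) ∪ {b | IsCompl a b} := by
    intro b
    simp only [Set.mem_union, Set.mem_insert_iff, Set.mem_singleton_iff]
    rcases h₁.le_iff.mp (inf_le_left : a ⊓ b ≤ a) with hinf | hinf
    · rcases h₂.le_iff.mp (le_sup_left : a ≤ a ⊔ b) with hsup | hsup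
      · exact Or.inr (IsCompl.of_eq hinf hsup)
      · have := h₁.le_iff.mp (sup_eq_left.mp hsup)
        tauto
    · have := h₂.le_iff.mp (inf_eq_left.mp hinf)
      tauto
  have hcompl : {b | IsCompl a b}.Subsingleton := fun b hb c hc => hb.right_unique hc
  calc Nat.card α = (Set.univ : Set α).ncard := (Set.ncard_univ α).symm
    _ ≤ (({⊥, a, ⊤} : Set α) ∪ {b | IsCompl a b}).ncard :=
        Set.ncard_le_ncard (fun b _ => hcases b) ((Set.toFinite _).union hcompl.finite)
    _ ≤ ({⊥, a, ⊤} : Set α).ncard + {b | IsCompl a b}.ncard := Set.ncard_union_le _ _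
    _ ≤ 3 + 1 := by
        grw [Set.ncard_insert_le, Set.ncard_insert_le, Set.ncard_singleton,
          (Set.ncard_le_one hcompl.finite).mpr fun b hb c hc => hcompl hb hc]

namespace PastedFamily

variable {K ι : Type*} (A : PastedFamily K ι)

instance blockLattice (i : ι) : Lattice (A.blk i) where
  le a b := A.le i a b
  le_refl a := A.le_refl i a a.2
  le_trans a b c := A.le_trans' i a b c
  le_antisymm a b hab hba := Subtype.ext (A.le_antisymm' i a b hab hba)
  sup a b := ⟨A.sup i a b, A.sup_mem i a b a.2 b.2⟩
  le_sup_left a b := A.le_sup_left i a b a.2 b.2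
  le_sup_right a b := A.le_sup_right i a b a.2 b.2
  sup_le a b c := A.sup_le i a b c a.2 b.2 c.2
  inf a b := ⟨A.inf i a b, A.inf_mem i a b a.2 b.2⟩
  inf_le_left a b := A.inf_le_left i a b a.2 b.2
  inf_le_right a b := A.inf_le_right i a b a.2 b.2
  le_inf a b c := A.le_inf i b c a b.2 c.2 a.2

instance blockDistribLattice (i : ι) : DistribLattice (A.blk i) :=
  .ofInfSupLe fun a b c => (Subtype.ext (A.distrib i a b c a.2 b.2 c.2)).le

instance blockBoundedOrder (i : ι) : BoundedOrder (A.blk i) where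
  top := ⟨A.top, A.top_mem i⟩
  le_top a := A.le_top i a a.2
  bot := ⟨A.bot, A.bot_mem i⟩
  bot_le a := A.bot_le i a a.2

def IsAtomIn (i : ι) (a : K) : Prop :=
  a ≠ A.bot ∧ ∀ z ∈ A.blk i, A.le i z a → z = A.bot ∨ z = a

def IsCoatomIn (i : ι) (a : K) : Prop :=
  a ≠ A.top ∧ ∀ z ∈ A.blk i, A.le i a z → z = A.top ∨ z = a

def CovByIn (i : ι) (x y : K) : Prop :=
  A.le i x y ∧ x ≠ y ∧ ∀ z ∈ A.blk i, A.le i x z → A.le i z y → z = x ∨ z = y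

def GCovBy (x y : K) : Prop :=
  A.gle x y ∧ x ≠ y ∧ ∀ z, A.gle x z → A.gle z y → z = x ∨ z = y

variable {A}

theorem IsAtomIn.isAtom {i : ι} {a : K} (h : A.IsAtomIn i a) (ha : a ∈ A.blk i) :
    IsAtom (⟨a, ha⟩ : A.blk i) :=
  ⟨fun hbot => h.1 (congrArg Subtype.val hbot), fun b hb =>
    Subtype.ext ((h.2 b b.2 hb.le).resolve_right fun hba => hb.ne (Subtype.ext hba))⟩

theorem IsCoatomIn.isCoatom {i : ι} {a : K} (h : A.IsCoatomIn i a) (ha : a ∈ A.blk i) :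
    IsCoatom (⟨a, ha⟩ : A.blk i) :=
  ⟨fun htop => h.1 (congrArg Subtype.val htop), fun b hb =>
    Subtype.ext ((h.2 b b.2 hb.le).resolve_right fun hba => hb.ne' (Subtype.ext hba))⟩

variable (A)

theorem not_isAtomIn_and_isCoatomIn {i : ι} {a : K} (ha : a ∈ A.blk i) :
    ¬ (A.IsAtomIn i a ∧ A.IsCoatomIn i a) := fun ⟨h₁, h₂⟩ => by
  have h4 := card_le_four_of_isAtom_of_isCoatom (h₁.isAtom ha) (h₂.isCoatom ha)
  have h6 := A.card6 i
  rw [Nat.card_coe_set_eq] at h4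
  omega

theorem bot_ne_top (i : ι) : A.bot ≠ A.top := by
  have : Nontrivial (A.blk i) := by
    have := A.card6 i
    have := (A.finite i).to_subtype
    rw [← Finite.one_lt_card_iff_nontrivial, Nat.card_coe_set_eq]
    omega
  exact fun h => (_root_.bot_ne_top : (⊥ : A.blk i) ≠ ⊤) (Subtype.ext h)

theorem compl_eq_iff {a b : K} : A.compl a = b ↔ a = A.compl b :=
  ⟨fun h => h ▸ (A.compl_invol a).symm, fun h => h ▸ A.compl_invol b⟩

theorem compl_bot (i : ι) : A.compl A.bot = A.top := by
  have hct := A.compl_mem i _ (A.top_mem i)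
  have h := A.compl_antitone i _ _ (A.bot_mem i) hct (A.bot_le i _ hct)
  rw [A.compl_invol] at h
  exact A.le_antisymm' i _ _ (A.le_top i _ (A.compl_mem i _ (A.bot_mem i))) h

theorem compl_top (i : ι) : A.compl A.top = A.bot :=
  A.compl_eq_iff.mpr (A.compl_bot i).symm

variable {A} {i j : ι} {a x y : K}

theorem inter_ne_pair (ha : a ∈ A.blk i ∩ A.blk j) (hab : a ≠ A.bot) (hat : a ≠ A.top) :
    A.blk i ∩ A.blk j ≠ {A.bot, A.top} := fun h => by
  rcases (h ▸ ha : a ∈ ({A.bot, A.top} : Set K)) with h | h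
  exacts [hab h, hat h]

theorem ncard_inter_le_four (hij : i ≠ j) (ha : a ∈ A.blk i ∩ A.blk j) (hab : a ≠ A.bot)
    (hat : a ≠ A.top) : (A.blk i ∩ A.blk j).ncard ≤ 4 :=
  ((A.inter i j hij).resolve_left (inter_ne_pair ha hab hat)).1

theorem atom_or_coatom_of_mem_inter (hij : i ≠ j) (ha : a ∈ A.blk i ∩ A.blk j)
    (hab : a ≠ A.bot) (hat : a ≠ A.top) :
    (A.IsAtomIn i a ∧ A.IsAtomIn j a) ∨ (A.IsCoatomIn i a ∧ A.IsCoatomIn j a) :=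
  ((A.inter i j hij).resolve_left (inter_ne_pair ha hab hat)).2.2.2.2.2 a ha hab hat

theorem IsAtomIn.of_mem_inter (h : A.IsAtomIn i a) (hij : i ≠ j) (ha : a ∈ A.blk i ∩ A.blk j)
    (hat : a ≠ A.top) : A.IsAtomIn j a := by
  rcases atom_or_coatom_of_mem_inter hij ha h.1 hat with ⟨-, h'⟩ | ⟨h', -⟩
  exacts [h', (A.not_isAtomIn_and_isCoatomIn ha.1 ⟨h, h'⟩).elim]

theorem IsCoatomIn.of_mem_inter (h : A.IsCoatomIn i a) (hij : i ≠ j)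
    (ha : a ∈ A.blk i ∩ A.blk j) (hab : a ≠ A.bot) : A.IsCoatomIn j a := by
  rcases atom_or_coatom_of_mem_inter hij ha hab h.1 with ⟨h', -⟩ | ⟨-, h'⟩
  exacts [(A.not_isAtomIn_and_isCoatomIn ha.1 ⟨h', h⟩).elim, h']

theorem CovByIn.isAtomIn (h : A.CovByIn i A.bot a) : A.IsAtomIn i a :=
  ⟨h.2.1.symm, fun z hz hza => h.2.2 z hz (A.bot_le i z hz) hza⟩

theorem CovByIn.isCoatomIn (h : A.CovByIn i a A.top) : A.IsCoatomIn i a :=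
  ⟨h.2.1, fun z hz haz => (h.2.2 z hz haz (A.le_top i z hz)).symm⟩

theorem eq_of_le_of_mem_inter (hij : i ≠ j) (hx : x ∈ A.blk i ∩ A.blk j)
    (hy : y ∈ A.blk i ∩ A.blk j) (hxb : x ≠ A.bot) (hyt : y ≠ A.top) (hne : y ≠ A.compl x)
    (hxy : A.le i x y) : x = y := by
  by_contra hxny
  have hxt : x ≠ A.top := fun h => hyt (A.le_antisymm' i _ _ (A.le_top i y hy.1) (h ▸ hxy))
  have hyb : y ≠ A.bot := fun h => hxb (A.le_antisymm' i _ _ (h ▸ hxy) (A.bot_le i x hx.1))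
  have hinter : ({A.bot, A.top, x, y} : Set K) = A.blk i ∩ A.blk j := by
    refine Set.eq_of_subset_of_ncard_le ?_ ?_ ((A.finite i).subset Set.inter_subset_left)
    · rintro w (rfl | rfl | rfl | rfl)
      exacts [⟨A.bot_mem i, A.bot_mem j⟩, ⟨A.top_mem i, A.top_mem j⟩, hx, hy]
    · rw [Set.ncard_eq_four.mpr ⟨_, _, _, _, A.bot_ne_top i, Ne.symm hxb, Ne.symm hyb,
        Ne.symm hxt, Ne.symm hyt, hxny, rfl⟩]
      exact ncard_inter_le_four hij hx hxb hxt
  have hcompl : ∀ a ∈ A.blk i ∩ A.blk j,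
      A.compl a = A.bot ∨ A.compl a = A.top ∨ A.compl a = x ∨ A.compl a = y := fun a ha => by
    have h : A.compl a ∈ A.blk i ∩ A.blk j := ⟨A.compl_mem i a ha.1, A.compl_mem j a ha.2⟩
    rwa [← hinter] at h
  have hcx : A.compl x = x := by
    rcases hcompl x hx with h | h | h | h
    · exact (hxt ((A.compl_eq_iff.mp h).trans (A.compl_bot i))).elim
    · exact (hxb ((A.compl_eq_iff.mp h).trans (A.compl_top i))).elim
    · exact h
    · exact (hne h.symm).elim
  have hcy : A.compl y = y := by
    rcases hcompl y hy with h | h | h | h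
    · exact (hyt ((A.compl_eq_iff.mp h).trans (A.compl_bot i))).elim
    · exact (hyb ((A.compl_eq_iff.mp h).trans (A.compl_top i))).elim
    · exact (hne (A.compl_eq_iff.mp h)).elim
    · exact h
  have hreg : (⟨y, hy.1⟩ : A.blk i) ⊓ ⟨y, hy.1⟩ ≤ ⟨x, hx.1⟩ ⊔ ⟨x, hx.1⟩ := by
    have h := A.regular i y x hy.1 hx.1
    rw [hcx, hcy] at h
    exact h
  rw [inf_idem, sup_idem] at hreg
  exact hxny (A.le_antisymm' i x y hxy hreg)

theorem CovByIn.of_gCovBy (hx : x ∈ A.blk i) (hy : y ∈ A.blk i) (h : A.GCovBy x y) :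
    A.CovByIn i x y := by
  obtain ⟨⟨j, hxj, hyj, hxy⟩, hxny, hcov⟩ := h
  exact ⟨A.le_compat j i x y hxj hyj hx hy hxy, hxny,
    fun z hz hxz hzy => hcov z ⟨i, hx, hz, hxz⟩ ⟨i, hz, hy, hzy⟩⟩

theorem GCovBy.of_covByIn (hx : x ∈ A.blk i) (hy : y ∈ A.blk i) (hne : y ≠ A.compl x)
    (h : A.CovByIn i x y) : A.GCovBy x y := by
  have ⟨hxy, hxny, hcov⟩ := h
  refine ⟨⟨i, hx, hy, hxy⟩, hxny, ?_⟩
  rintro z ⟨j, hxj, hzj, hxz⟩ ⟨k, hzk, hyk, hzy⟩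
  by_cases hzi : z ∈ A.blk i
  · exact hcov z hzi (A.le_compat j i x z hxj hzj hx hzi hxz)
      (A.le_compat k i z y hzk hyk hzi hy hzy)
  have hij : i ≠ j := fun h => hzi (h ▸ hzj)
  have hik : i ≠ k := fun h => hzi (h ▸ hzk)
  have hzb : z ≠ A.bot := fun h => hzi (h ▸ A.bot_mem i)
  have hzt : z ≠ A.top := fun h => hzi (h ▸ A.top_mem i)
  by_cases hxb : x = A.bot
  · subst hxb
    have hyt : y ≠ A.top := A.compl_bot i ▸ hne
    have hatom := h.isAtomIn.of_mem_inter hik ⟨hy, hyk⟩ hyt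
    exact Or.inr ((hatom.2 z hzk hzy).resolve_left hzb)
  by_cases hyt : y = A.top
  · subst hyt
    have hcoatom := h.isCoatomIn.of_mem_inter hij ⟨hx, hxj⟩ hxb
    exact Or.inl ((hcoatom.2 z hzj hxz).resolve_left hzt)
  rcases eq_or_ne j k with rfl | hjk
  · exact (hxny (eq_of_le_of_mem_inter hij ⟨hx, hxj⟩ ⟨hy, hyk⟩ hxb hyt hne hxy)).elim
  rcases atom_or_coatom_of_mem_inter hjk ⟨hzj, hzk⟩ hzb hzt with ⟨hatom, -⟩ | ⟨-, hcoatom⟩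
  · exact Or.inl ((hatom.2 x hxj hxz).resolve_left hxb).symm
  · exact Or.inr ((hcoatom.2 y hyk hzy).resolve_left hyt).symm

end PastedFamily

theorem stmt_11_general {K ι : Type*} (A : PastedFamily K ι) (i : ι) (x y : K)
    (hx : x ∈ A.blk i) (hy : y ∈ A.blk i) (hne : y ≠ A.compl x) :
    (A.gle x y ∧ x ≠ y ∧ ∀ z, A.gle x z → A.gle z y → z = x ∨ z = y) ↔
    (A.le i x y ∧ x ≠ y ∧
      ∀ z ∈ A.blk i, A.le i x z → A.le i z y → z = x ∨ z = y) :=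
  ⟨PastedFamily.CovByIn.of_gCovBy hx hy, PastedFamily.GCovBy.of_covByIn hx hy hne⟩

/-- In an atomic amalgam of Kleene lattices: if `x ≤ y` inside a block `K_i`
and `y ≠ x'`, then `x` is covered by `y` in the amalgam iff `x` is covered by
`y` in `K_i`. -/
theorem stmt_11 {K ι : Type*} (A : PastedFamily K ι) (i : ι) (x y : K)
    (hx : x ∈ A.blk i) (hy : y ∈ A.blk i) (hxy : A.le i x y)
    (hne : y ≠ A.compl x) :
    (A.gle x y ∧ x ≠ y ∧ ∀ z, A.gle x z → A.gle z y → z = x ∨ z = y) ↔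
    (A.le i x y ∧ x ≠ y ∧
      ∀ z ∈ A.blk i, A.le i x z → A.le i z y → z = x ∨ z = y) :=
  stmt_11_general A i x y hx hy hne
end
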